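/- arXiv:1906.07693 — 2 statements merged into one kernel-verified Lean document; each statement's English description precedes it below -/
import Mathlib

section
/- If U : [0,∞) → ℝ is continuous, convex, U(0) = 0, and 1 < N < ∞, and the function u(s) = s^N U(s^{-N}) on (0,∞) is convex, then u is also decreasing (non-increasing). -/
/-- If `U : [0,∞) → ℝ` is continuous, convex, `U 0 = 0`, `1 < N < ∞`, and
`u(s) = s^N * U(s^{-N})` is convex on `(0,∞)`, then `u` is non-increasing on `(0,∞)`. -/
theorem u_antitone_of_convex (U : ℝ → ℝ) (hUc : ContinuousOn U (Set.Ici 0))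
    (hUconv : ConvexOn ℝ (Set.Ici 0) U) (hU0 : U 0 = 0) (N : ℝ) (hN : 1 < N)
    (hu : ConvexOn ℝ (Set.Ioi 0) (fun s : ℝ => s ^ N * U (s ^ (-N)))) :
    AntitoneOn (fun s : ℝ => s ^ N * U (s ^ (-N))) (Set.Ioi 0) := by
  intro x hx y hy hxy
  simp only
  have hx0 : (0:ℝ) < x := hx
  have hy0 : (0:ℝ) < y := hy
  set a := y ^ (-N) with ha_def
  set b := x ^ (-N) with hb_def
  have ha : 0 < a := Real.rpow_pos_of_pos hy0 _
  have hb : 0 < b := Real.rpow_pos_of_pos hx0 _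
  have hab : a ≤ b := Real.rpow_le_rpow_of_nonpos hx0 hxy (by linarith)
  have key : U a / a ≤ U b / b := by
    rcases eq_or_lt_of_le hab with h | h
    · rw [h]
    · have := hUconv.secant_mono (a := 0) (x := a) (y := b)
        (Set.self_mem_Ici) ha.le hb.le (ne_of_gt ha) (ne_of_gt hb) hab
      simpa [hU0] using this
  have hxN : x ^ N = b⁻¹ := by
    rw [hb_def, Real.rpow_neg hx0.le, inv_inv]
  have hyN : y ^ N = a⁻¹ := by
    rw [ha_def, Real.rpow_neg hy0.le, inv_inv]
  rw [hxN, hyN]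
  rw [div_le_div_iff₀ ha hb] at key
  rw [inv_mul_eq_div, inv_mul_eq_div, div_le_div_iff₀ ha hb]
  linarith [key]
end

section
/- Let (Ω, π) be a probability space, e : Ω → X measurable with (e)_#π = ρ𝔪 for a σ-finite measure 𝔪 on X, and let A ⊆ Ω be measurable; assume π = T_#((e)_#π) for a Borel map T : X → Ω with e ∘ T = id_X on spt ρ. Then the density of (e)_#(π|_A) with respect to 𝔪 equals x ↦ χ_A(T(x))·ρ(x) for 𝔪-a.e. x; consequently, for π-a.e. ω, the density of (e)_#(π|_A) at e(ω) equals χ_A(ω)·ρ(e(ω)). -/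
open MeasureTheory

/-- Localization identity: if `(e)_#π = ρ𝔪` and `π` is induced by a Borel map `T` from
its `e`-marginal (`T_#((e)_#π) = π`, `e∘T = id` a.e.), then for any Borel `A ⊆ Ω` the
density of `(e)_#(π|_A)` w.r.t. `𝔪` is `x ↦ χ_A(T x)·ρ(x)`, and consequently for
`π`-a.e. `ω` this density at `e(ω)` equals `χ_A(ω)·ρ(e ω)`. -/
theorem density_of_restricted_pushforward {Ω X : Type*} [MeasurableSpace Ω]
    [MeasurableSpace X]
    (π : Measure Ω) [IsProbabilityMeasure π] (m : Measure X) [SigmaFinite m]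
    (e : Ω → X) (he : Measurable e)
    (ρ : X → ℝ) (hρm : Measurable ρ) (hρ0 : ∀ x, 0 ≤ ρ x)
    (hpush : π.map e = m.withDensity (fun x => ENNReal.ofReal (ρ x)))
    (T : X → Ω) (hT : Measurable T)
    (hTpush : (π.map e).map T = π)
    (hsec : ∀ᵐ x ∂(π.map e), e (T x) = x)
    (A : Set Ω) (hA : MeasurableSet A) :
    (π.restrict A).map e =
      m.withDensity (fun x => ENNReal.ofReal ((T ⁻¹' A).indicator ρ x)) ∧
    ∀ᵐ ω ∂π, (T ⁻¹' A).indicator ρ (e ω) = A.indicator (fun _ => (1:ℝ)) ω * ρ (e ω) := by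
  have hs : MeasurableSet (T ⁻¹' A) := hT hA
  constructor
  · have h1 : π.restrict A = ((π.map e).restrict (T ⁻¹' A)).map T := by
      rw [← Measure.restrict_map hT hA, hTpush]
    have h2 : (π.restrict A).map e = ((π.map e).restrict (T ⁻¹' A)).map (e ∘ T) := by
      rw [h1, Measure.map_map he hT]
    have hsec' : ∀ᵐ x ∂((π.map e).restrict (T ⁻¹' A)), (e ∘ T) x = x :=
      ae_restrict_of_ae hsec
    have h3 : ((π.map e).restrict (T ⁻¹' A)).map (e ∘ T)
        = (π.map e).restrict (T ⁻¹' A) := by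
      rw [Measure.map_congr hsec']
      exact Measure.map_id
    rw [h2, h3, hpush, restrict_withDensity hs, ← withDensity_indicator hs]
    congr 1
    funext x
    by_cases hx : x ∈ T ⁻¹' A <;>
      simp [Set.indicator_of_mem, Set.indicator_of_notMem, hx]
  · rw [← hTpush]
    have hmeas : MeasurableSet {ω | (T ⁻¹' A).indicator ρ (e ω)
        = A.indicator (fun _ => (1:ℝ)) ω * ρ (e ω)} := by
      apply measurableSet_eq_fun
      · exact (hρm.indicator hs).comp he
      · exact ((measurable_one.indicator hA)).mul (hρm.comp he)
    rw [Filter.eventually_iff]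
    rw [show (ae ((π.map e).map T)) = _ from rfl]
    rw [← Filter.eventually_iff, ae_map_iff hT.aemeasurable hmeas]
    filter_upwards [hsec] with x hx
    simp only [Set.mem_setOf_eq, hx]
    by_cases hxA : T x ∈ A <;>
      simp [Set.indicator_of_mem, Set.indicator_of_notMem, hxA]
end
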